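/- arXiv:2605.31209 — 10 statements merged into one kernel-verified Lean document; each statement's English description precedes it below -/
import Mathlib

section
/- Let N ≥ 1 be an integer, q ∈ ℝ with q ≠ 1, and θ ∈ ℝ such that 1 − (q−1)θk > 0 for every k ∈ {0,…,N}. Then ∑_{k=0}^{N} k · C(N,k) · (1 − (q−1)θk)^{1/(q−1)} = N · (1 − (q−1)θ)^{1/(q−1)} · ∑_{k=0}^{N−1} C(N−1,k) · (1 − (q−1)θ′k)^{1/(q−1)}, where θ′ = θ/(1 − (q−1)θ). Equivalently, in the q-exponential Erdős–Rényi ensemble the expected number of links satisfies ⟨L⟩ = N · exp_{2−q}(−θ) · Z_{q,N−1}(θ′) / Z_{q,N}(θ). -/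
/-!
Since `k C(N,k) = N C(N-1,k-1)`, the sum is `N` times a sum over `k - 1` links. The `q`-exponential
then factors as `exp_{2-q}(-θ(k+1)) = exp_{2-q}(-θ) exp_{2-q}(-θ' k)`, because
`1 - (q-1)θ(k+1) = (1 - (q-1)θ)(1 - (q-1)θ' k)` with `θ' = θ/(1 - (q-1)θ)`.
-/

open Finset

theorem Nat.succ_mul_choose_succ_eq_mul_choose_pred (N k : ℕ) :
    (k + 1) * N.choose (k + 1) = N * (N - 1).choose k := by
  rcases N with _ | n
  · simp
  · rw [Nat.add_one_sub_one, Nat.add_one_mul_choose_eq, mul_comm]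

theorem Finset.sum_range_succ_mul_choose_mul {R : Type*} [CommSemiring R] (N : ℕ) (f : ℕ → R) :
    ∑ k ∈ range (N + 1), (k : R) * N.choose k * f k
      = N * ∑ k ∈ range N, ((N - 1).choose k : R) * f (k + 1) := by
  rw [sum_range_succ', mul_sum]
  simp only [Nat.cast_zero, zero_mul, add_zero]
  refine sum_congr rfl fun k _ => ?_
  rw [← Nat.cast_mul, ← mul_assoc, ← Nat.cast_mul, Nat.succ_mul_choose_succ_eq_mul_choose_pred]

theorem one_sub_mul_add_one_eq_mul (a θ x : ℝ) (h : 1 - a * θ ≠ 0) :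
    1 - a * θ * (x + 1) = (1 - a * θ) * (1 - a * (θ / (1 - a * θ)) * x) := by
  field_simp
  ring

theorem rpow_one_sub_mul_add_one_eq_mul (a θ s x : ℝ) (h₁ : 0 < 1 - a * θ)
    (hx : 0 < 1 - a * θ * (x + 1)) :
    (1 - a * θ * (x + 1)) ^ s = (1 - a * θ) ^ s * (1 - a * (θ / (1 - a * θ)) * x) ^ s := by
  rw [one_sub_mul_add_one_eq_mul a θ x h₁.ne'] at hx ⊢
  exact Real.mul_rpow h₁.le (pos_of_mul_pos_right hx h₁.le).le

theorem qER_average_links_general (N : ℕ) (q θ : ℝ)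
    (hpos : ∀ k : ℕ, k ≤ N → 0 < 1 - (q - 1) * θ * (k : ℝ)) :
    ∑ k ∈ range (N + 1),
        (k : ℝ) * (N.choose k : ℝ) * (1 - (q - 1) * θ * (k : ℝ)) ^ ((1 : ℝ) / (q - 1))
      = (N : ℝ) * (1 - (q - 1) * θ) ^ ((1 : ℝ) / (q - 1)) *
        ∑ k ∈ range N,
          ((N - 1).choose k : ℝ) *
            (1 - (q - 1) * (θ / (1 - (q - 1) * θ)) * (k : ℝ)) ^ ((1 : ℝ) / (q - 1)) := by
  rw [sum_range_succ_mul_choose_mul N fun k : ℕ ↦ (1 - (q - 1) * θ * (k : ℝ)) ^ (1 / (q - 1)),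
    mul_assoc, mul_sum _ _ ((1 - (q - 1) * θ) ^ _)]
  congr 1
  refine sum_congr rfl fun k hk => ?_
  have hkN : k + 1 ≤ N := mem_range.mp hk
  have h₁ : 0 < 1 - (q - 1) * θ := by simpa using hpos 1 (by omega)
  have hk₁ : 0 < 1 - (q - 1) * θ * ((k : ℝ) + 1) := by exact_mod_cast hpos (k + 1) hkN
  rw [Nat.cast_succ, rpow_one_sub_mul_add_one_eq_mul _ _ _ _ h₁ hk₁]
  ring

/-- The average number of links identity for the `q`-exponential Erdős–Rényi model:
for `N ≥ 1`, `q ≠ 1` and `θ` such that `1 - (q-1)θk > 0` for all `0 ≤ k ≤ N`,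
`∑_{k=0}^{N} k C(N,k) (1-(q-1)θk)^(1/(q-1))
  = N (1-(q-1)θ)^(1/(q-1)) ∑_{k=0}^{N-1} C(N-1,k) (1-(q-1)θ'k)^(1/(q-1))`
with `θ' = θ/(1-(q-1)θ)`, i.e. `⟨L⟩ = N exp_{2-q}(-θ) Z_{q,N-1}(θ') / Z_{q,N}(θ)`. -/
theorem qER_average_links (N : ℕ) (hN : 1 ≤ N) (q θ : ℝ) (hq : q ≠ 1)
    (hpos : ∀ k : ℕ, k ≤ N → 0 < 1 - (q - 1) * θ * (k : ℝ)) :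
    ∑ k ∈ range (N + 1),
        (k : ℝ) * (N.choose k : ℝ) * (1 - (q - 1) * θ * (k : ℝ)) ^ ((1 : ℝ) / (q - 1))
      = (N : ℝ) * (1 - (q - 1) * θ) ^ ((1 : ℝ) / (q - 1)) *
        ∑ k ∈ range N,
          ((N - 1).choose k : ℝ) *
            (1 - (q - 1) * (θ / (1 - (q - 1) * θ)) * (k : ℝ)) ^ ((1 : ℝ) / (q - 1)) :=
  qER_average_links_general N q θ hpos
end

section
/- Let N ≥ 1 and 0 ≤ k ≤ N be integers, q ∈ ℝ with q ≠ 1, and θ ∈ ℝ such that 1 − (q−1)θm > 0 for every m ∈ {0,…,N}. Then ∑_{j=0}^{N−k} C(N−k,j) · exp_{2−q}(−θ(k+j)) = exp_{2−q}(−kθ) · Z_{q,N−k}( θ / (1 − k(q−1)θ) ). Consequently, in the q-exponential Erdős–Rényi ensemble on N node pairs the joint moment of any k distinct link variables equals exp_{2−q}(−kθ) · Z_{q,N−k}(θ/(1 − k(q−1)θ)) / Z_{q,N}(θ). -/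
open Finset

/-- The deformed exponential `exp_{2-q}(x) = (1 + (q-1)x)^(1/(q-1))`. -/
noncomputable def qexp2q (q x : ℝ) : ℝ := (1 + (q - 1) * x) ^ ((1 : ℝ) / (q - 1))

/-- The `q`-exponential Erdős–Rényi partition function with `m` node pairs. -/
noncomputable def Zq (q : ℝ) (m : ℕ) (θ : ℝ) : ℝ :=
  ∑ j ∈ range (m + 1), (m.choose j : ℝ) * qexp2q q (-(θ * (j : ℝ)))

/-! The `q`-exponential turns sums into products after rescaling the second summand:
`1 + (q-1)(x+y) = (1 + (q-1)x)(1 + (q-1)y/(1 + (q-1)x))`. Taking out the `k` links that must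
be present therefore factors `exp_{2-q}(-kθ)` out of every term of the partial partition
function, at the price of replacing `θ` by `θ/(1 - k(q-1)θ)`. The unnormalised moment is a sum
over the configurations containing the `k` given links, i.e. over the subsets of the remaining
`N - k` pairs. -/

theorem qexp2q_add_eq_mul {q x y : ℝ} (hx : 0 < 1 + (q - 1) * x)
    (hxy : 0 ≤ 1 + (q - 1) * (x + y)) :
    qexp2q q (x + y) = qexp2q q x * qexp2q q (y / (1 + (q - 1) * x)) := by
  have hsplit : 1 + (q - 1) * (x + y) =
      (1 + (q - 1) * x) * (1 + (q - 1) * (y / (1 + (q - 1) * x))) := by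
    field_simp
    ring
  have hfactor : 0 ≤ 1 + (q - 1) * (y / (1 + (q - 1) * x)) :=
    nonneg_of_mul_nonneg_right (hsplit ▸ hxy) hx
  unfold qexp2q
  rw [hsplit, Real.mul_rpow hx.le hfactor]

theorem sum_choose_mul_qexp2q_shift (q θ : ℝ) (n k : ℕ) (hk : 0 < 1 - (q - 1) * θ * k)
    (hkj : ∀ j ≤ n, 0 ≤ 1 - (q - 1) * θ * (k + j)) :
    ∑ j ∈ range (n + 1), (n.choose j : ℝ) * qexp2q q (-(θ * ((k : ℝ) + (j : ℝ)))) =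
      qexp2q q (-((k : ℝ) * θ)) * Zq q n (θ / (1 - (k : ℝ) * (q - 1) * θ)) := by
  rw [Zq, mul_sum]
  refine sum_congr rfl fun j hj => ?_
  have hx : 0 < 1 + (q - 1) * -((k : ℝ) * θ) := by linarith
  have hxy : 0 ≤ 1 + (q - 1) * (-((k : ℝ) * θ) + -(θ * j)) := by
    linarith [hkj j (Nat.lt_succ_iff.mp (mem_range.mp hj))]
  have hθ : -(θ * j) / (1 + (q - 1) * -((k : ℝ) * θ)) =
      -(θ / (1 - k * (q - 1) * θ) * j) := by
    ring
  rw [show -(θ * ((k : ℝ) + j)) = -((k : ℝ) * θ) + -(θ * j) by ring,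
    qexp2q_add_eq_mul hx hxy, hθ]
  ring

theorem sum_bool_fun_eq_sum_finset {ι M : Type*} [Fintype ι] [DecidableEq ι] [AddCommMonoid M]
    (F : (ι → Bool) → M) : ∑ a, F a = ∑ T : Finset ι, F fun i => decide (i ∈ T) :=
  Fintype.sum_bijective (fun a => ({i | a i} : Finset ι))
    ⟨fun a b h => funext fun i => by simpa using congrArg (i ∈ ·) h,
      fun T => ⟨fun i => decide (i ∈ T), by ext; simp⟩⟩ _ _ fun a => by congr; simp

theorem sum_superset_eq_sum_choose {ι M : Type*} [Fintype ι] [DecidableEq ι] [AddCommMonoid M]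
    (S : Finset ι) (g : ℕ → M) :
    ∑ T with S ⊆ T, g #T = ∑ j ∈ range (#Sᶜ + 1), (#Sᶜ).choose j • g (#S + j) := by
  have hsupersets : ({T | S ⊆ T} : Finset (Finset ι)) = (Sᶜ).powerset.image (S ∪ ·) := by
    rw [compl_eq_univ_sdiff, ← Icc_eq_image_powerset (subset_univ S), Icc_eq_filter_powerset,
      powerset_univ]
  have hdisj : ∀ U ∈ (Sᶜ).powerset, Disjoint S U := fun U hU =>
    disjoint_of_subset_right (mem_powerset.mp hU) disjoint_compl_right
  rw [hsupersets, sum_image, ← sum_powerset_apply_card]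
  · exact sum_congr rfl fun U hU => by rw [card_union_of_disjoint (hdisj U hU)]
  · intro U hU V hV hUV
    simpa only [union_sdiff_cancel_left (hdisj U hU), union_sdiff_cancel_left (hdisj V hV)]
      using congrArg (· \ S) hUV

theorem sum_prod_indicator_mul_card {ι R : Type*} [Fintype ι] [DecidableEq ι] [CommSemiring R]
    (S : Finset ι) (g : R → R) :
    ∑ a : ι → Bool,
        (∏ i ∈ S, if a i then (1 : R) else 0) * g (∑ i, if a i then (1 : R) else 0) =
      ∑ j ∈ range (Fintype.card ι - #S + 1),
        ((Fintype.card ι - #S).choose j : R) * g ((#S : R) + (j : R)) := by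
  rw [sum_bool_fun_eq_sum_finset]
  simp only [decide_eq_true_eq, prod_boole, sum_boole, ite_mul, one_mul, zero_mul, sum_ite,
    sum_const_zero, add_zero, filter_mem_eq_inter, univ_inter, ← subset_iff]
  rw [sum_superset_eq_sum_choose S (fun m => g m), card_compl]
  simp only [nsmul_eq_mul, Nat.cast_add]

theorem qER_higher_moments_general (N k : ℕ) (hk : k ≤ N) (q θ : ℝ)
    (hpos : ∀ m : ℕ, m ≤ N → 0 < 1 - (q - 1) * θ * (m : ℝ)) :
    (∑ j ∈ range (N - k + 1),
        ((N - k).choose j : ℝ) * qexp2q q (-(θ * ((k : ℝ) + (j : ℝ))))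
      = qexp2q q (-((k : ℝ) * θ)) * Zq q (N - k) (θ / (1 - (k : ℝ) * (q - 1) * θ)))
    ∧ ∀ S : Finset (Fin N), S.card = k →
        (∑ a : Fin N → Bool,
            (∏ i ∈ S, (if a i then (1 : ℝ) else 0)) *
              qexp2q q (-(θ * ∑ i : Fin N, (if a i then (1 : ℝ) else 0)))) / Zq q N θ
          = qexp2q q (-((k : ℝ) * θ)) * Zq q (N - k) (θ / (1 - (k : ℝ) * (q - 1) * θ)) /
              Zq q N θ := by
  have hpartial := sum_choose_mul_qexp2q_shift q θ (N - k) k (hpos k hk) fun j hj => by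
    exact_mod_cast (hpos (k + j) (by omega)).le
  refine ⟨hpartial, fun S hS => ?_⟩
  rw [sum_prod_indicator_mul_card S fun x => qexp2q q (-(θ * x)), Fintype.card_fin, hS, hpartial]

/-- Higher moments in the `q`-exponential Erdős–Rényi model: for `1 ≤ N`, `k ≤ N`,
`q ≠ 1` and `θ` with `1 - (q-1)θm > 0` for `0 ≤ m ≤ N`, one has
`∑_{j=0}^{N-k} C(N-k,j) exp_{2-q}(-θ(k+j)) = exp_{2-q}(-kθ) Z_{q,N-k}(θ/(1-k(q-1)θ))`,
and consequently the joint moment of any `k` distinct link variables equals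
`exp_{2-q}(-kθ) Z_{q,N-k}(θ/(1-k(q-1)θ)) / Z_{q,N}(θ)`. -/
theorem qER_higher_moments (N k : ℕ) (hN : 1 ≤ N) (hk : k ≤ N) (q θ : ℝ) (hq : q ≠ 1)
    (hpos : ∀ m : ℕ, m ≤ N → 0 < 1 - (q - 1) * θ * (m : ℝ)) :
    (∑ j ∈ range (N - k + 1),
        ((N - k).choose j : ℝ) * qexp2q q (-(θ * ((k : ℝ) + (j : ℝ))))
      = qexp2q q (-((k : ℝ) * θ)) * Zq q (N - k) (θ / (1 - (k : ℝ) * (q - 1) * θ)))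
    ∧ ∀ S : Finset (Fin N), S.card = k →
        (∑ a : Fin N → Bool,
            (∏ i ∈ S, (if a i then (1 : ℝ) else 0)) *
              qexp2q q (-(θ * ∑ i : Fin N, (if a i then (1 : ℝ) else 0)))) / Zq q N θ
          = qexp2q q (-((k : ℝ) * θ)) * Zq q (N - k) (θ / (1 - (k : ℝ) * (q - 1) * θ)) /
              Zq q N θ :=
  qER_higher_moments_general N k hk q θ hpos
end

section
/- Let n ≥ 2, let E be the set of unordered pairs {i,j} of distinct elements of {1,…,n}, and fix a pair {k,l} ∈ E. Let q ∈ ℝ with q ≠ 1 and θ : {1,…,n} → ℝ be such that 1 − (q−1)(θ_k + θ_l) > 0 and such that for every configuration a : E → {0,1} one has 1 + (q−1) ∑_{{i,j}∈E} (θ_i + θ_j) a({i,j}) > 0. Then ∑_{a : E→{0,1}, a({k,l})=1} exp_{2−q}( − ∑_{{i,j}∈E} (θ_i+θ_j) a({i,j}) ) = exp_{2−q}(−(θ_k+θ_l)) · ∑_{a′ : (E∖{{k,l}})→{0,1}} exp_{2−q}( − ∑_{{i,j}∈E, {i,j}≠{k,l}} ((θ_i+θ_j)/(1 − (q−1)(θ_k+θ_l)))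 · a′({i,j}) ). -/
open Finset

/-- The set of unordered pairs of distinct elements of `{1,…,n}`, encoded as
ordered pairs `(i,j)` with `i < j`. -/
abbrev Epairs (n : ℕ) := {p : Fin n × Fin n // p.1 < p.2}

/-! Configurations with `a_{kl} = 1` are the configurations of the remaining pairs, with
`θ_k + θ_l` added to the Hamiltonian. The weight then factors because
`exp_{2-q}(x + y) = exp_{2-q}(x) · exp_{2-q}(y / (1 + (q-1)x))` whenever `1 + (q-1)x > 0`: the base
`1 + (q-1)(x+y)` is `(1 + (q-1)x)(1 + (q-1)y/(1 + (q-1)x))`, and a positive factor can be pulled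
out of a real power even when the other factor is negative. -/

theorem Real.mul_rpow_of_pos_left {x : ℝ} (hx : 0 < x) (y z : ℝ) :
    (x * y) ^ z = x ^ z * y ^ z := by
  rcases lt_trichotomy y 0 with hy | rfl | hy
  · rw [Real.rpow_def_of_neg (mul_neg_of_pos_of_neg hx hy), Real.rpow_def_of_neg hy,
      Real.rpow_def_of_pos hx, Real.log_mul hx.ne' hy.ne, add_mul, Real.exp_add]
    ring
  · rcases eq_or_ne z 0 with rfl | hz
    · simp
    · simp [Real.zero_rpow hz]
  · exact Real.mul_rpow hx.le hy.le

theorem qexp2q_add {q x : ℝ} (hx : 0 < 1 + (q - 1) * x) (y : ℝ) :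
    qexp2q q (x + y) = qexp2q q x * qexp2q q (y / (1 + (q - 1) * x)) := by
  have hbase : 1 + (q - 1) * (x + y)
      = (1 + (q - 1) * x) * (1 + (q - 1) * (y / (1 + (q - 1) * x))) := by
    field_simp
    ring
  rw [qexp2q, hbase, Real.mul_rpow_of_pos_left hx, qexp2q, qexp2q]

theorem Finset.sum_filter_apply_eq_sum_funSplitAt {α β M : Type*} [Fintype α] [DecidableEq α]
    [Fintype β] [DecidableEq β] [AddCommMonoid M] (i : α) (b : β) (g : (α → β) → M) :
    ∑ a ∈ univ.filter (fun a : α → β => a i = b), g a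
      = ∑ a' : {j // j ≠ i} → β, g ((Equiv.funSplitAt i β).symm (b, a')) := by
  rw [sum_filter, ← (Equiv.funSplitAt i β).symm.sum_comp, Fintype.sum_prod_type,
    Fintype.sum_eq_single b fun b' hb' => ?_]
  · simp
  · simp [hb']

theorem qCM_marginal_numerator_general (n : ℕ) (q : ℝ)
    (θ : Fin n → ℝ) (k l : Fin n) (hkl : k < l)
    (hD : 0 < 1 - (q - 1) * (θ k + θ l)) :
    ∑ a ∈ Finset.univ.filter (fun a : Epairs n → Bool => a ⟨(k, l), hkl⟩ = true),
        qexp2q q (-(∑ e : Epairs n, (θ e.1.1 + θ e.1.2) * (if a e then (1 : ℝ) else 0)))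
      = qexp2q q (-(θ k + θ l)) *
        ∑ a' : {e : Epairs n // e ≠ ⟨(k, l), hkl⟩} → Bool,
          qexp2q q (-(∑ e : {e : Epairs n // e ≠ ⟨(k, l), hkl⟩},
            ((θ e.1.1.1 + θ e.1.1.2) / (1 - (q - 1) * (θ k + θ l))) *
              (if a' e then (1 : ℝ) else 0))) := by
  rw [sum_filter_apply_eq_sum_funSplitAt, mul_sum]
  refine sum_congr rfl fun a' _ => ?_
  have hsplit : ∑ e : Epairs n, (θ e.1.1 + θ e.1.2) *
        (if (Equiv.funSplitAt ⟨(k, l), hkl⟩ Bool).symm (true, a') e then (1 : ℝ) else 0)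
      = (θ k + θ l) + ∑ e : {e : Epairs n // e ≠ ⟨(k, l), hkl⟩},
          (θ e.1.1.1 + θ e.1.1.2) * (if a' e then (1 : ℝ) else 0) := by
    rw [Fintype.sum_eq_add_sum_subtype_ne _ ⟨(k, l), hkl⟩]
    refine congrArg₂ (· + ·) (by simp) (sum_congr rfl fun e _ => ?_)
    rw [Equiv.funSplitAt_symm_apply, dif_neg e.2]
  have hD' : 0 < 1 + (q - 1) * -(θ k + θ l) := by linarith
  rw [hsplit, neg_add, qexp2q_add hD', mul_neg, ← sub_eq_add_neg, neg_div, sum_div]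
  simp_rw [div_mul_eq_mul_div]

/-- Marginal link probability numerator in the `q`-exponential configuration model:
summing the weights `exp_{2-q}(-∑ (θ_i+θ_j) a_{ij})` over configurations with
`a_{kl} = 1` yields `exp_{2-q}(-(θ_k+θ_l))` times the reduced partition function with
rescaled multipliers `(θ_i+θ_j)/(1-(q-1)(θ_k+θ_l))` over the remaining pairs. -/
theorem qCM_marginal_numerator (n : ℕ) (hn : 2 ≤ n) (q : ℝ) (hq : q ≠ 1)
    (θ : Fin n → ℝ) (k l : Fin n) (hkl : k < l)
    (hD : 0 < 1 - (q - 1) * (θ k + θ l))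
    (hpos : ∀ a : Epairs n → Bool,
      0 < 1 + (q - 1) *
        ∑ e : Epairs n, (θ e.1.1 + θ e.1.2) * (if a e then (1 : ℝ) else 0)) :
    ∑ a ∈ Finset.univ.filter (fun a : Epairs n → Bool => a ⟨(k, l), hkl⟩ = true),
        qexp2q q (-(∑ e : Epairs n, (θ e.1.1 + θ e.1.2) * (if a e then (1 : ℝ) else 0)))
      = qexp2q q (-(θ k + θ l)) *
        ∑ a' : {e : Epairs n // e ≠ ⟨(k, l), hkl⟩} → Bool,
          qexp2q q (-(∑ e : {e : Epairs n // e ≠ ⟨(k, l), hkl⟩},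
            ((θ e.1.1.1 + θ e.1.1.2) / (1 - (q - 1) * (θ k + θ l))) *
              (if a' e then (1 : ℝ) else 0))) :=
  qCM_marginal_numerator_general n q θ k l hkl hD
end

section
/- Fix real numbers q > 1 and θ ≥ 0. Then lim_{N→∞} (1/N) · ln( ∑_{k=0}^{N} C(N,k) · (1 + (q−1)θk)^{−1/(q−1)} ) = ln 2. In other words, at fixed q and θ the free entropy density of the q-exponential Erdős–Rényi model converges to the value ln 2 = H_b(1/2) of the unbiased random graph with link probability 1/2, independently of q and θ. -/
/-!
Since `1 + (q-1)θk ≥ 1` and the exponent `-1/(q-1)` is negative, every weight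
`(1 + (q-1)θk)^(-1/(q-1))` lies between its value at `k = N` and `1`. Hence the partition function
is squeezed between `2^N (1 + (q-1)θN)^(-1/(q-1))` and `2^N`, and the polynomial correction factor
only contributes `O(log N / N)` to the free entropy density.
-/

open Finset Filter Asymptotics

theorem tendsto_log_one_add_mul_div_atTop {c : ℝ} (hc : 0 ≤ c) :
    Tendsto (fun x : ℝ => Real.log (1 + c * x) / x) atTop (nhds 0) := by
  rcases hc.eq_or_lt with rfl | hc
  · simp
  have h_lin : (fun x : ℝ => 1 + c * x) =O[atTop] id :=
    (isLittleO_const_id_atTop 1).isBigO.add (isBigO_const_mul_self c id atTop)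
  have h_tendsto : Tendsto (fun x : ℝ => 1 + c * x) atTop atTop :=
    tendsto_atTop_add_const_left _ 1 (tendsto_id.const_mul_atTop hc)
  exact ((Real.isLittleO_log_id_atTop.comp_tendsto h_tendsto).trans_isBigO
    h_lin).tendsto_div_nhds_zero

theorem sum_range_choose_mul_le_two_pow {f : ℕ → ℝ} (N : ℕ) (hf : ∀ k ≤ N, f k ≤ 1) :
    ∑ k ∈ range (N + 1), (N.choose k : ℝ) * f k ≤ 2 ^ N := by
  calc ∑ k ∈ range (N + 1), (N.choose k : ℝ) * f k
      ≤ ∑ k ∈ range (N + 1), (N.choose k : ℝ) := by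
        gcongr with k hk
        exact mul_le_of_le_one_right (Nat.cast_nonneg _)
          (hf k (Nat.lt_succ_iff.mp (mem_range.mp hk)))
    _ = 2 ^ N := by exact_mod_cast Nat.sum_range_choose N

theorem two_pow_mul_le_sum_range_choose_mul {f : ℕ → ℝ} (N : ℕ)
    (hf : ∀ k ≤ N, f N ≤ f k) :
    2 ^ N * f N ≤ ∑ k ∈ range (N + 1), (N.choose k : ℝ) * f k := by
  calc (2 : ℝ) ^ N * f N = ∑ k ∈ range (N + 1), (N.choose k : ℝ) * f N := by
        rw [← sum_mul]
        exact_mod_cast congrArg (fun m : ℕ => (m : ℝ) * f N) (Nat.sum_range_choose N).symm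
    _ ≤ ∑ k ∈ range (N + 1), (N.choose k : ℝ) * f k := by
        gcongr with k hk
        exact hf k (Nat.lt_succ_iff.mp (mem_range.mp hk))

theorem tendsto_log_div_of_pow_mul_le_of_le_pow {S a : ℕ → ℝ} {b : ℝ} (hb : 0 < b)
    (ha : ∀ N, 0 < a N) (h_lower : ∀ N, b ^ N * a N ≤ S N) (h_upper : ∀ N, S N ≤ b ^ N)
    (h_sub : Tendsto (fun N : ℕ => Real.log (a N) / N) atTop (nhds 0)) :
    Tendsto (fun N : ℕ => Real.log (S N) / N) atTop (nhds (Real.log b)) := by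
  have hS : ∀ N, 0 < S N := fun N => (mul_pos (pow_pos hb N) (ha N)).trans_le (h_lower N)
  refine tendsto_of_tendsto_of_tendsto_of_le_of_le' (by simpa using h_sub.const_add (Real.log b))
    tendsto_const_nhds ?_ ?_
  · filter_upwards [eventually_gt_atTop 0] with N hN
    have hN' : (0 : ℝ) < N := by exact_mod_cast hN
    calc Real.log b + Real.log (a N) / N = Real.log (b ^ N * a N) / N := by
          rw [Real.log_mul (pow_ne_zero N hb.ne') (ha N).ne', Real.log_pow]
          field_simp
      _ ≤ Real.log (S N) / N := by
          gcongr
          exacts [mul_pos (pow_pos hb N) (ha N), h_lower N]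
  · filter_upwards [eventually_gt_atTop 0] with N hN
    have hN' : (0 : ℝ) < N := by exact_mod_cast hN
    calc Real.log (S N) / N ≤ Real.log (b ^ N) / N := by
          gcongr
          exacts [hS N, h_upper N]
      _ = Real.log b := by
          rw [Real.log_pow]
          field_simp

/-- At fixed `q > 1` and `θ ≥ 0`, the free entropy density of the `q`-exponential
Erdős–Rényi model converges to `ln 2` as `N → ∞`:
`lim_{N→∞} (1/N) ln(∑_{k=0}^N C(N,k) (1+(q-1)θk)^(-1/(q-1))) = ln 2`. -/
theorem qER_free_entropy_degeneracy (q θ : ℝ) (hq : 1 < q) (hθ : 0 ≤ θ) :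
    Tendsto (fun N : ℕ =>
        Real.log (∑ k ∈ range (N + 1),
          (N.choose k : ℝ) * (1 + (q - 1) * θ * (k : ℝ)) ^ (-(1 : ℝ) / (q - 1))) / (N : ℝ))
      atTop (nhds (Real.log 2)) := by
  set c := (q - 1) * θ
  set e := -(1 : ℝ) / (q - 1)
  have hc : 0 ≤ c := mul_nonneg (sub_nonneg.mpr hq.le) hθ
  have he : e ≤ 0 := div_nonpos_of_nonpos_of_nonneg (by norm_num) (sub_nonneg.mpr hq.le)
  have h_base : ∀ x : ℝ, 0 ≤ x → 1 ≤ 1 + c * x :=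
    fun x hx => le_add_of_nonneg_right (mul_nonneg hc hx)
  refine tendsto_log_div_of_pow_mul_le_of_le_pow two_pos
    (fun N => Real.rpow_pos_of_pos (zero_lt_one.trans_le (h_base N N.cast_nonneg)) e)
    (fun N => two_pow_mul_le_sum_range_choose_mul (f := fun k : ℕ => (1 + c * k) ^ e) N
      fun k hk => Real.rpow_le_rpow_of_nonpos (zero_lt_one.trans_le (h_base k k.cast_nonneg))
        (by gcongr) he)
    (fun N => sum_range_choose_mul_le_two_pow N fun k _ =>
      Real.rpow_le_one_of_one_le_of_nonpos (h_base k k.cast_nonneg) he) ?_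
  have h_log : ∀ N : ℕ, Real.log ((1 + c * N) ^ e) / N = e * (Real.log (1 + c * N) / N) :=
    fun N => by rw [Real.log_rpow (zero_lt_one.trans_le (h_base N N.cast_nonneg)), mul_div_assoc]
  simpa [h_log] using
    ((tendsto_log_one_add_mul_div_atTop hc).comp tendsto_natCast_atTop_atTop).const_mul e
end

section
/- Fix real numbers q > 1, θ ≥ 0, and c ∈ (0,1). With k_N := ⌊cN⌋ and Z_{q,N}(θ) := ∑_{k=0}^{N} C(N,k) (1+(q−1)θk)^{−1/(q−1)}, one has lim_{N→∞} (1/N) · ln( C(N,k_N) · (1+(q−1)θ k_N)^{−1/(q−1)} / Z_{q,N}(θ) ) = H_b(c) − ln 2. That is, the probability that the q-exponential Erdős–Rényi model produces link density c decays exponentially with rate function I(c) = H_b(1/2) − H_b(c). -/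
open Finset Filter

/-- The binary entropy `H_b(c) = -c ln c - (1-c) ln(1-c)`. -/
noncomputable def Hb (c : ℝ) : ℝ := -(c * Real.log c) - (1 - c) * Real.log (1 - c)

/-!
Write the probability as `C(N, k) w(k) / Z_N` with `w(k) = (1 + (q - 1) θ k) ^ (-1 / (q - 1))`.
The weight lies in `[w(N), 1]` and `w(N)` decays only polynomially in `N`, so it is invisible at
exponential scale: `(1 / N) log w(k_N) → 0`, and `2 ^ N w(N) ≤ Z_N ≤ 2 ^ N` gives
`(1 / N) log Z_N → log 2`. What remains is the entropy estimate
`exp (N H(k / N)) / (N + 1) ≤ C(N, k) ≤ exp (N H(k / N))`, which holds because the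
binomial `(N, k / N)` distribution has its mode at `k`.
-/

open Real Polynomial Topology

lemma Hb_eq_binEntropy : Hb = binEntropy := by
  ext c
  simp only [Hb, binEntropy, log_inv]
  ring

lemma bernsteinPolynomial_eval (N j : ℕ) (p : ℝ) :
    (bernsteinPolynomial ℝ N j).eval p = N.choose j * p ^ j * (1 - p) ^ (N - j) := by
  simp [bernsteinPolynomial]

lemma sum_bernsteinPolynomial_eval (N : ℕ) (p : ℝ) :
    ∑ j ∈ range (N + 1), (bernsteinPolynomial ℝ N j).eval p = 1 := by
  simpa [eval_finsetSum] using congrArg (eval p) (bernsteinPolynomial.sum ℝ N)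

section BinomialMode

variable {N j k : ℕ}

lemma bernsteinPolynomial_eval_nonneg {p : ℝ} (hp₀ : 0 ≤ p) (hp₁ : p ≤ 1) :
    0 ≤ (bernsteinPolynomial ℝ N j).eval p := by
  rw [bernsteinPolynomial_eval]
  have : 0 ≤ 1 - p := by linarith
  positivity

lemma bernsteinPolynomial_eval_le_one {p : ℝ} (hp₀ : 0 ≤ p) (hp₁ : p ≤ 1) (hj : j ≤ N) :
    (bernsteinPolynomial ℝ N j).eval p ≤ 1 := by
  rw [← sum_bernsteinPolynomial_eval N p]
  exact single_le_sum (f := fun i => (bernsteinPolynomial ℝ N i).eval p)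
    (fun i _ => bernsteinPolynomial_eval_nonneg hp₀ hp₁) (mem_range.2 (by omega))

lemma bernsteinPolynomial_eval_succ_mul (hj : j < N) (p : ℝ) :
    (bernsteinPolynomial ℝ N (j + 1)).eval p * ((j + 1) * (1 - p)) =
      (bernsteinPolynomial ℝ N j).eval p * ((N - j) * p) := by
  have hchoose : (N.choose (j + 1) : ℝ) * (j + 1) = N.choose j * (N - j) := by
    have h := congrArg (Nat.cast (R := ℝ)) (Nat.choose_succ_right_eq N j)
    push_cast [Nat.cast_sub hj.le] at h
    exact h
  obtain ⟨m, rfl⟩ : ∃ m, N = j + 1 + m := ⟨N - (j + 1), by omega⟩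
  simp only [bernsteinPolynomial_eval, show j + 1 + m - (j + 1) = m by omega,
    show j + 1 + m - j = m + 1 by omega]
  linear_combination p ^ j * p * (1 - p) ^ (m + 1) * hchoose

lemma natCast_div_mem_Ioo (hk₀ : 0 < k) (hkN : k < N) : (k / N : ℝ) ∈ Set.Ioo 0 1 := by
  have hN : (0 : ℝ) < N := by exact_mod_cast hk₀.trans hkN
  exact ⟨by positivity, (div_lt_one hN).2 (by exact_mod_cast hkN)⟩

/-- `(bernsteinPolynomial ℝ N j).eval p` is the binomial probability of `j` successes in `N`
trials; at `p = k / N` it is largest at `j = k`. -/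
lemma bernsteinPolynomial_eval_natCast_div_le (hk₀ : 0 < k) (hkN : k < N) (j : ℕ) :
    (bernsteinPolynomial ℝ N j).eval (k / N : ℝ) ≤
      (bernsteinPolynomial ℝ N k).eval (k / N : ℝ) := by
  obtain ⟨hp₀, hp₁⟩ := natCast_div_mem_Ioo hk₀ hkN
  set p : ℝ := k / N
  have hNp : (N : ℝ) * p = k := mul_div_cancel₀ _ (Nat.cast_ne_zero.2 (hk₀.trans hkN).ne')
  have hq₀ : 0 < 1 - p := by linarith
  set t : ℕ → ℝ := fun j => (bernsteinPolynomial ℝ N j).eval p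
  have ht : ∀ j, 0 ≤ t j := fun j => bernsteinPolynomial_eval_nonneg hp₀.le hp₁.le
  -- Both steps compare `t (i + 1) / t i = (N - i) p / ((i + 1) (1 - p))` with `1`,
  -- and `(N - i) p - (i + 1) (1 - p) = k - (i + 1) + p` since `N p = k`.
  have up : MonotoneOn t (Set.Iic k) := by
    refine monotoneOn_of_le_succ Set.ordConnected_Iic fun i _ _ hi => ?_
    simp only [Order.succ_eq_add_one, Set.mem_Iic] at hi ⊢
    have hi' : (i : ℝ) + 1 ≤ k := by exact_mod_cast hi
    refine le_of_mul_le_mul_right (a := (i + 1) * (1 - p)) ?_ (mul_pos (by positivity) hq₀)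
    rw [bernsteinPolynomial_eval_succ_mul (by omega)]
    exact mul_le_mul_of_nonneg_left (by linarith) (ht i)
  have down : AntitoneOn t (Set.Ici k) := by
    refine antitoneOn_of_succ_le Set.ordConnected_Ici fun i _ hi _ => ?_
    simp only [Order.succ_eq_add_one, Set.mem_Ici] at hi ⊢
    rcases lt_or_ge i N with hiN | hiN
    · have hi' : (k : ℝ) ≤ i := by exact_mod_cast hi
      have hiN' : (i : ℝ) < N := by exact_mod_cast hiN
      refine le_of_mul_le_mul_right (a := (i + 1) * (1 - p)) ?_ (mul_pos (by positivity) hq₀)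
      rw [bernsteinPolynomial_eval_succ_mul hiN]
      exact mul_le_mul_of_nonneg_left (by linarith) (ht i)
    · simpa [t, bernsteinPolynomial_eval, Nat.choose_eq_zero_of_lt (by omega : N < i + 1)]
        using ht i
  rcases le_total j k with hjk | hkj
  · exact up hjk (Set.mem_Iic.2 le_rfl) hjk
  · exact down (Set.mem_Ici.2 le_rfl) hkj hkj

lemma inv_add_one_le_bernsteinPolynomial_eval_natCast_div (hk₀ : 0 < k) (hkN : k < N) :
    ((N : ℝ) + 1)⁻¹ ≤ (bernsteinPolynomial ℝ N k).eval (k / N : ℝ) := by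
  rw [inv_le_iff_one_le_mul₀' (by positivity)]
  calc (1 : ℝ) = ∑ j ∈ range (N + 1), (bernsteinPolynomial ℝ N j).eval (k / N : ℝ) :=
        (sum_bernsteinPolynomial_eval N _).symm
    _ ≤ ∑ _j ∈ range (N + 1), (bernsteinPolynomial ℝ N k).eval (k / N : ℝ) :=
        sum_le_sum fun j _ => bernsteinPolynomial_eval_natCast_div_le hk₀ hkN j
    _ = (N + 1) * (bernsteinPolynomial ℝ N k).eval (k / N : ℝ) := by simp

lemma log_bernsteinPolynomial_eval_natCast_div (hk₀ : 0 < k) (hkN : k < N) :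
    log ((bernsteinPolynomial ℝ N k).eval (k / N : ℝ)) =
      log (N.choose k) - N * binEntropy (k / N : ℝ) := by
  obtain ⟨hp₀, hp₁⟩ := natCast_div_mem_Ioo hk₀ hkN
  set p : ℝ := k / N
  have hNp : (N : ℝ) * p = k := mul_div_cancel₀ _ (Nat.cast_ne_zero.2 (hk₀.trans hkN).ne')
  have hq₀ : 0 < 1 - p := by linarith
  have hchoose : (0 : ℝ) < N.choose k := by exact_mod_cast Nat.choose_pos hkN.le
  rw [bernsteinPolynomial_eval, log_mul (by positivity) (by positivity),
    log_mul hchoose.ne' (by positivity), log_pow, log_pow, Nat.cast_sub hkN.le]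
  simp only [binEntropy, log_inv]
  linear_combination (log (1 - p) - log p) * hNp

lemma abs_log_choose_sub_mul_binEntropy_le (hk : k ≤ N) :
    |log (N.choose k) - N * binEntropy (k / N : ℝ)| ≤ log (N + 1) := by
  have hlog : 0 ≤ log ((N : ℝ) + 1) := log_nonneg (by linarith [N.cast_nonneg (α := ℝ)])
  rcases Nat.eq_zero_or_pos k with rfl | hk₀
  · simpa using hlog
  rcases hk.eq_or_lt with rfl | hkN
  · simpa [div_self (Nat.cast_ne_zero.2 hk₀.ne' : (k : ℝ) ≠ 0)] using hlog
  obtain ⟨hp₀, hp₁⟩ := natCast_div_mem_Ioo hk₀ hkN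
  rw [← log_bernsteinPolynomial_eval_natCast_div hk₀ hkN, abs_le, ← log_inv]
  exact ⟨log_le_log (by positivity) (inv_add_one_le_bernsteinPolynomial_eval_natCast_div hk₀ hkN),
    (log_nonpos (bernsteinPolynomial_eval_nonneg hp₀.le hp₁.le)
      (bernsteinPolynomial_eval_le_one hp₀.le hp₁.le hk)).trans hlog⟩

end BinomialMode

section PolynomialWeight

variable {a : ℝ}

lemma one_le_one_add_mul_natCast (ha : 0 ≤ a) (k : ℕ) : 1 ≤ 1 + a * k :=
  le_add_of_nonneg_right (by positivity)

lemma antitone_one_add_mul_natCast_rpow (ha : 0 ≤ a) {e : ℝ} (he : e ≤ 0) :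
    Antitone fun k : ℕ => (1 + a * k) ^ e := fun i j hij =>
  rpow_le_rpow_of_nonpos (by positivity) (by gcongr) he

lemma tendsto_log_one_add_mul_div_atTop_s7 (ha : 0 ≤ a) :
    Tendsto (fun N : ℕ => log (1 + a * N) / N) atTop (𝓝 0) := by
  rcases ha.eq_or_lt with rfl | ha
  · simp
  have hlin : Tendsto (fun x : ℝ => 1 + a * x) atTop atTop :=
    tendsto_atTop_add_const_left _ _ (tendsto_id.const_mul_atTop ha)
  have hO : (fun x : ℝ => 1 + a * x) =O[atTop] fun x => x := by
    refine Asymptotics.IsBigO.of_bound (a + 1) ?_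
    filter_upwards [eventually_ge_atTop 1] with x hx
    rw [norm_of_nonneg (by positivity), norm_of_nonneg (by positivity)]
    linarith
  have ho : (fun x : ℝ => log (1 + a * x)) =o[atTop] fun x => x :=
    (isLittleO_log_id_atTop.comp_tendsto hlin).trans_isBigO hO
  exact ho.tendsto_div_nhds_zero.comp tendsto_natCast_atTop_atTop

lemma tendsto_log_one_add_mul_rpow_div_atTop (ha : 0 ≤ a) {k : ℕ → ℕ} (hk : ∀ N, k N ≤ N)
    (e : ℝ) : Tendsto (fun N : ℕ => log ((1 + a * k N) ^ e) / N) atTop (𝓝 0) := by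
  have hbase := fun N => one_le_one_add_mul_natCast ha (k N)
  have hlog : Tendsto (fun N : ℕ => log (1 + a * k N) / N) atTop (𝓝 0) := by
    refine squeeze_zero (fun N => div_nonneg (log_nonneg (hbase N)) N.cast_nonneg) (fun N => ?_)
      (tendsto_log_one_add_mul_div_atTop_s7 ha)
    have hkN : (k N : ℝ) ≤ N := by exact_mod_cast hk N
    gcongr
  have he := hlog.const_mul e
  rw [mul_zero] at he
  refine he.congr fun N => ?_
  rw [log_rpow (zero_lt_one.trans_le (hbase N)), mul_div_assoc]

end PolynomialWeight

lemma tendsto_log_choose_div_atTop {k : ℕ → ℕ} {c : ℝ} (hk : ∀ N, k N ≤ N)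
    (hc : Tendsto (fun N : ℕ => (k N : ℝ) / N) atTop (𝓝 c)) :
    Tendsto (fun N : ℕ => log (N.choose (k N)) / N) atTop (𝓝 (binEntropy c)) := by
  have hH : Tendsto (fun N : ℕ => binEntropy ((k N : ℝ) / N)) atTop (𝓝 (binEntropy c)) :=
    (binEntropy_continuous.tendsto c).comp hc
  have hsucc : Tendsto (fun N : ℕ => log (N + 1) / N) atTop (𝓝 0) := by
    simpa [add_comm] using tendsto_log_one_add_mul_div_atTop_s7 zero_le_one
  have hdiff : Tendsto (fun N : ℕ => log (N.choose (k N)) / N - binEntropy ((k N : ℝ) / N))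
      atTop (𝓝 0) := by
    refine squeeze_zero_norm' ?_ hsucc
    filter_upwards [eventually_gt_atTop 0] with N hN
    have hN' : (0 : ℝ) < N := by exact_mod_cast hN
    rw [norm_eq_abs, ← mul_div_cancel_left₀ (binEntropy _) hN'.ne', ← sub_div, abs_div,
      abs_of_pos hN']
    exact div_le_div_of_nonneg_right (abs_log_choose_sub_mul_binEntropy_le (hk N)) hN'.le
  simpa using hH.add hdiff

section BinomialSum

variable {w : ℕ → ℝ}

lemma sum_range_choose_natCast (N : ℕ) : ∑ k ∈ range (N + 1), (N.choose k : ℝ) = 2 ^ N := by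
  exact_mod_cast Nat.sum_range_choose N

lemma sum_choose_mul_pos (hw₀ : ∀ k, 0 < w k) (N : ℕ) :
    0 < ∑ k ∈ range (N + 1), N.choose k * w k :=
  sum_pos (fun k hk => mul_pos (Nat.cast_pos.2 (Nat.choose_pos
    (Nat.lt_succ_iff.1 (mem_range.1 hk)))) (hw₀ k)) nonempty_range_add_one

lemma two_pow_mul_le_sum_choose_mul (hw : Antitone w) (N : ℕ) :
    2 ^ N * w N ≤ ∑ k ∈ range (N + 1), N.choose k * w k := by
  rw [← sum_range_choose_natCast, sum_mul]
  exact sum_le_sum fun k hk => by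
    gcongr
    exact hw (Nat.lt_succ_iff.1 (mem_range.1 hk))

lemma sum_choose_mul_le_two_pow (hw₁ : ∀ k, w k ≤ 1) (N : ℕ) :
    ∑ k ∈ range (N + 1), N.choose k * w k ≤ 2 ^ N := by
  rw [← sum_range_choose_natCast]
  exact sum_le_sum fun k _ => mul_le_of_le_one_right (by positivity) (hw₁ k)

lemma tendsto_log_sum_choose_mul_div_atTop (hw₀ : ∀ k, 0 < w k) (hw₁ : ∀ k, w k ≤ 1)
    (hw : Antitone w) (hlog : Tendsto (fun N : ℕ => log (w N) / N) atTop (𝓝 0)) :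
    Tendsto (fun N : ℕ => log (∑ k ∈ range (N + 1), N.choose k * w k) / N) atTop
      (𝓝 (log 2)) := by
  refine tendsto_of_tendsto_of_tendsto_of_le_of_le' (by simpa using hlog.const_add (log 2))
    tendsto_const_nhds ?_ ?_ <;> filter_upwards [eventually_gt_atTop 0] with N hN <;>
    have hN' : (0 : ℝ) < N := by exact_mod_cast hN
  · rw [le_div_iff₀ hN', add_mul, div_mul_cancel₀ _ hN'.ne', mul_comm, ← log_pow,
      ← log_mul (by positivity) (hw₀ N).ne']
    exact log_le_log (mul_pos (by positivity) (hw₀ N)) (two_pow_mul_le_sum_choose_mul hw N)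
  · rw [div_le_iff₀ hN', mul_comm, ← log_pow]
    exact log_le_log (sum_choose_mul_pos hw₀ N)
      (sum_choose_mul_le_two_pow hw₁ N)

end BinomialSum

/-- Large deviation principle at fixed `q > 1`, `θ ≥ 0` and link density `c ∈ (0,1)`:
with `k_N = ⌊cN⌋` and `Z_{q,N}(θ) = ∑_{k=0}^N C(N,k) (1+(q-1)θk)^(-1/(q-1))`,
`lim_{N→∞} (1/N) ln(C(N,k_N) (1+(q-1)θ k_N)^(-1/(q-1)) / Z_{q,N}(θ)) = H_b(c) - ln 2`,
i.e. the probability of link density `c` decays with rate `I(c) = H_b(1/2) - H_b(c)`. -/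
theorem qER_large_deviations (q θ c : ℝ) (hq : 1 < q) (hθ : 0 ≤ θ)
    (hc : c ∈ Set.Ioo (0 : ℝ) 1) :
    Tendsto (fun N : ℕ =>
        (1 / (N : ℝ)) * Real.log
          ((N.choose ⌊c * (N : ℝ)⌋₊ : ℝ) *
              (1 + (q - 1) * θ * (⌊c * (N : ℝ)⌋₊ : ℝ)) ^ (-(1 : ℝ) / (q - 1)) /
            (∑ k ∈ range (N + 1),
              (N.choose k : ℝ) * (1 + (q - 1) * θ * (k : ℝ)) ^ (-(1 : ℝ) / (q - 1)))))
      atTop (nhds (Hb c - Real.log 2)) := by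
  obtain ⟨hc₀, hc₁⟩ := hc
  set a := (q - 1) * θ
  set e := -(1 : ℝ) / (q - 1)
  have ha : 0 ≤ a := mul_nonneg (by linarith) hθ
  have he : e ≤ 0 := div_nonpos_of_nonpos_of_nonneg (by norm_num) (by linarith)
  have hw₀ : ∀ k : ℕ, 0 < (1 + a * k) ^ e := fun k => rpow_pos_of_pos (by positivity) e
  have hfloor : ∀ N : ℕ, ⌊c * N⌋₊ ≤ N := fun N =>
    Nat.floor_le_of_le (mul_le_of_le_one_left N.cast_nonneg hc₁.le)
  have hchoose := tendsto_log_choose_div_atTop hfloor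
    ((tendsto_nat_floor_mul_div_atTop hc₀.le).comp tendsto_natCast_atTop_atTop)
  have hweight := tendsto_log_one_add_mul_rpow_div_atTop ha hfloor e
  have hZ := tendsto_log_sum_choose_mul_div_atTop hw₀
    (fun k => rpow_le_one_of_one_le_of_nonpos (one_le_one_add_mul_natCast ha k) he)
    (antitone_one_add_mul_natCast_rpow ha he)
    (tendsto_log_one_add_mul_rpow_div_atTop ha (fun N => le_rfl) e)
  rw [Hb_eq_binEntropy, ← add_zero (binEntropy c)]
  refine ((hchoose.add hweight).sub hZ).congr fun N => ?_
  have hC : (0 : ℝ) < N.choose ⌊c * N⌋₊ := by exact_mod_cast Nat.choose_pos (hfloor N)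
  rw [log_div (mul_pos hC (hw₀ _)).ne' (sum_choose_mul_pos hw₀ N).ne',
    log_mul hC.ne' (hw₀ _).ne']
  ring
end

section
/- Fix r > 0 and define g_r(c) := σ(1/(rc)) · σ(−1/(rc)) / (r c²) for c > 0, where σ(x) = 1/(1+e^{−x}). Then g_r(c) > 0 for all c > 0, g_r(c) → 0 as c → 0⁺, g_r(c) → 0 as c → +∞, and a point c > 0 is a critical point of g_r (i.e. g_r′(c) = 0) if and only if tanh(1/(2rc)) = 2rc. -/
/-!
Since `σ(u) σ(-u) = 1 / (4 cosh² (u / 2))`, substituting `t = 1 / (2 r c)` gives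
`g_r(c) = r φ(t)²` with `φ(t) = t / cosh t`. As `c → 0⁺` we have `t → ∞` and as `c → ∞` we have
`t → 0`, and `φ` vanishes in both limits. Since `φ'(t) = (1 - t tanh t) / cosh t` and
`dt/dc ≠ 0`, the critical points of `g_r` are the solutions of `tanh t = 1 / t = 2 r c`.
-/

open Filter

/-- The logistic function `σ(x) = 1/(1+e^{-x})`. -/
noncomputable def logistic (x : ℝ) : ℝ := 1 / (1 + Real.exp (-x))

open Real Topology

theorem logistic_mul_logistic_neg (x : ℝ) :
    logistic x * logistic (-x) = (4 * cosh (x / 2) ^ 2)⁻¹ := by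
  have hx : exp x = exp (x / 2) ^ 2 := by rw [← exp_nat_mul]; ring_nf
  rw [logistic, logistic, neg_neg, cosh_eq, exp_neg, exp_neg, hx]
  field_simp
  ring

-- No hypotheses needed: when `r * c = 0` both sides are `0` by the convention `x / 0 = 0`.
theorem logistic_mul_logistic_neg_div (r c : ℝ) :
    logistic (1 / (r * c)) * logistic (-(1 / (r * c))) / (r * c ^ 2) =
      r * (1 / (2 * r * c) / cosh (1 / (2 * r * c))) ^ 2 := by
  rcases eq_or_ne r 0 with rfl | hr
  · simp
  rcases eq_or_ne c 0 with rfl | hc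
  · simp
  rw [logistic_mul_logistic_neg, show 1 / (r * c) / 2 = 1 / (2 * r * c) by ring]
  field_simp
  ring

theorem hasDerivAt_div_cosh (t : ℝ) :
    HasDerivAt (fun t => t / cosh t) ((1 - t * tanh t) / cosh t) t := by
  refine ((hasDerivAt_id' t).div (hasDerivAt_cosh t) (cosh_pos t).ne').congr_deriv ?_
  rw [tanh_eq_sinh_div_cosh]
  field_simp

theorem tendsto_div_cosh_atTop : Tendsto (fun t => t / cosh t) atTop (𝓝 0) := by
  have h := (tendsto_pow_mul_exp_neg_atTop_nhds_zero 1).const_mul 2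
  simp only [pow_one, mul_zero] at h
  refine tendsto_of_tendsto_of_tendsto_of_le_of_le' tendsto_const_nhds h ?_ ?_
  · filter_upwards [eventually_ge_atTop 0] with t ht
    positivity
  · filter_upwards [eventually_ge_atTop 0] with t ht
    rw [div_le_iff₀ (cosh_pos t), cosh_eq, exp_neg]
    field_simp
    nlinarith [exp_pos t]

theorem hasDerivAt_one_div_const_mul {a : ℝ} (ha : a ≠ 0) {c : ℝ} (hc : c ≠ 0) :
    HasDerivAt (fun c => 1 / (a * c)) (-a / (a * c) ^ 2) c := by
  simpa only [one_div, neg_div, mul_one] using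
    ((hasDerivAt_id' c).const_mul a).fun_inv (mul_ne_zero ha hc)

theorem deriv_mul_sq_div_cosh_eq_zero_iff {r c : ℝ} (hr : 0 < r) (hc : 0 < c) :
    deriv (fun c => r * (1 / (2 * r * c) / cosh (1 / (2 * r * c))) ^ 2) c = 0 ↔
      tanh (1 / (2 * r * c)) = 2 * r * c := by
  have hφ : HasDerivAt (fun c => 1 / (2 * r * c) / cosh (1 / (2 * r * c)))
      ((1 - 1 / (2 * r * c) * tanh (1 / (2 * r * c))) / cosh (1 / (2 * r * c)) *
        (-(2 * r) / (2 * r * c) ^ 2)) c :=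
    (hasDerivAt_div_cosh _).comp c (hasDerivAt_one_div_const_mul (by positivity) hc.ne')
  rw [((hφ.fun_pow 2).const_mul r).deriv]
  have hcosh := (cosh_pos (1 / (2 * r * c))).ne'
  have hφ0 : 1 / (2 * r * c) / cosh (1 / (2 * r * c)) ≠ 0 := by positivity
  have hinner : -(2 * r) / (2 * r * c) ^ 2 ≠ 0 :=
    div_ne_zero (neg_ne_zero.2 (by positivity)) (by positivity)
  simp only [Nat.add_one_sub_one, pow_one, mul_eq_zero, div_eq_zero_iff, Nat.cast_ofNat,
    two_ne_zero, hr.ne', hφ0, hinner, hcosh, false_or, or_false, sub_eq_zero]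
  rw [one_div, ← div_eq_inv_mul, eq_div_iff (by positivity), one_mul, eq_comm]

/-- For fixed `r > 0`, the function `g_r(c) = σ(1/(rc)) σ(-1/(rc)) / (rc²)` on `(0,∞)`
is positive, tends to `0` as `c → 0⁺` and as `c → +∞`, and `c > 0` is a critical point
of `g_r` if and only if `tanh(1/(2rc)) = 2rc`. -/
theorem qER_transition_derivative_properties (r : ℝ) (hr : 0 < r) :
    (∀ c : ℝ, 0 < c →
      0 < logistic (1 / (r * c)) * logistic (-(1 / (r * c))) / (r * c ^ 2)) ∧
    Tendsto (fun c : ℝ => logistic (1 / (r * c)) * logistic (-(1 / (r * c))) / (r * c ^ 2))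
      (nhdsWithin 0 (Set.Ioi 0)) (nhds 0) ∧
    Tendsto (fun c : ℝ => logistic (1 / (r * c)) * logistic (-(1 / (r * c))) / (r * c ^ 2))
      atTop (nhds 0) ∧
    (∀ c : ℝ, 0 < c →
      (deriv (fun c : ℝ =>
          logistic (1 / (r * c)) * logistic (-(1 / (r * c))) / (r * c ^ 2)) c = 0 ↔
        Real.tanh (1 / (2 * r * c)) = 2 * r * c)) := by
  simp only [logistic_mul_logistic_neg_div]
  have h2r : 0 < 2 * r := by positivity
  refine ⟨fun c hc => by positivity, ?_, ?_, fun c hc => deriv_mul_sq_div_cosh_eq_zero_iff hr hc⟩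
  · have ht : Tendsto (fun c => 1 / (2 * r * c)) (𝓝[>] 0) atTop := by
      simpa only [one_div, mul_inv] using tendsto_inv_nhdsGT_zero.const_mul_atTop (inv_pos.2 h2r)
    have hlim : Tendsto (fun t => r * (t / cosh t) ^ 2) atTop (𝓝 0) := by
      simpa using (tendsto_div_cosh_atTop.pow 2).const_mul r
    exact hlim.comp ht
  · have ht : Tendsto (fun c => 1 / (2 * r * c)) atTop (𝓝 0) := by
      simpa only [one_div, Pi.inv_def, id] using (tendsto_id.const_mul_atTop h2r).inv_tendsto_atTop
    have hlim : Tendsto (fun t => r * (t / cosh t) ^ 2) (𝓝 0) (𝓝 0) := by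
      have : Continuous fun t => r * (t / cosh t) ^ 2 := by
        fun_prop (disch := exact fun t => (cosh_pos t).ne')
      simpa using this.tendsto 0
    exact hlim.comp ht
end

section
/- Fix r > 0 and suppose c > 0 satisfies tanh(1/(2rc)) = 2rc; write x = 2rc (so 0 < x < 1). Then g_r(c) = r(1−x²)/x², where g_r(c) := σ(1/(rc))σ(−1/(rc))/(rc²) and σ(x) = 1/(1+e^{−x}). Consequently, g_r(c) > 1 if and only if r > x²/(1−x²). -/
open Real

theorem logistic_eq_sigmoid : logistic = sigmoid := by
  funext x
  rw [logistic, sigmoid_def, one_div]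

theorem Real.tanh_half_eq_two_mul_sigmoid_sub_one (y : ℝ) : tanh (y / 2) = 2 * sigmoid y - 1 := by
  have hsq : exp (-y) = exp (-(y / 2)) * exp (-(y / 2)) := by rw [← exp_add]; ring_nf
  have hinv : exp (y / 2) * exp (-(y / 2)) = 1 := by rw [← exp_add]; simp
  rw [tanh_eq_sinh_div_cosh, sinh_eq, cosh_eq, sigmoid_def, hsq]
  have : 0 < exp (-(y / 2)) := exp_pos _
  field_simp
  linear_combination 2 * exp (-(y / 2)) * hinv

theorem Real.sigmoid_mul_sigmoid_neg (y : ℝ) :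
    sigmoid y * sigmoid (-y) = (1 - tanh (y / 2) ^ 2) / 4 := by
  rw [sigmoid_neg, tanh_half_eq_two_mul_sigmoid_sub_one]
  ring

/-- Fix `r > 0` and suppose `c > 0` satisfies `tanh(1/(2rc)) = 2rc`; write `x = 2rc`
(so `0 < x < 1`). Then `g_r(c) = r(1-x²)/x²` where
`g_r(c) = σ(1/(rc)) σ(-1/(rc)) / (rc²)`; consequently `g_r(c) > 1` iff
`r > x²/(1-x²)`. -/
theorem qER_transition_value_at_critical (r c : ℝ) (hr : 0 < r) (hc : 0 < c)
    (h : Real.tanh (1 / (2 * r * c)) = 2 * r * c) :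
    (0 < 2 * r * c ∧ 2 * r * c < 1) ∧
    logistic (1 / (r * c)) * logistic (-(1 / (r * c))) / (r * c ^ 2)
      = r * (1 - (2 * r * c) ^ 2) / (2 * r * c) ^ 2 ∧
    (1 < logistic (1 / (r * c)) * logistic (-(1 / (r * c))) / (r * c ^ 2) ↔
      (2 * r * c) ^ 2 / (1 - (2 * r * c) ^ 2) < r) := by
  set x := 2 * r * c with hx
  have hx0 : 0 < x := by positivity
  have hx1 : x < 1 := h ▸ tanh_lt_one _
  have hhalf : 1 / (r * c) / 2 = 1 / x := by rw [hx]; field_simp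
  have hvalue : logistic (1 / (r * c)) * logistic (-(1 / (r * c))) / (r * c ^ 2)
      = r * (1 - x ^ 2) / x ^ 2 := by
    rw [logistic_eq_sigmoid, sigmoid_mul_sigmoid_neg, hhalf, h, hx]
    field_simp
    ring
  refine ⟨⟨hx0, hx1⟩, hvalue, ?_⟩
  have h1x2 : 0 < 1 - x ^ 2 := by nlinarith
  rw [hvalue, one_lt_div (by positivity), div_lt_iff₀ h1x2, mul_comm]
end

section
/- (Proposition 1.) Fix r > 0 and let x* be the unique positive solution of tanh(1/x) = x. Then there exists θ > 0 such that the saddle-point equation c = ( 1 + exp( θ/(1+rθc) ) )^{−1} has at least two distinct solutions c in the interval (0,1) if and only if r > r_cp := (x*)²/(1−(x*)²). -/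
/-! With `L c = log ((1 - c) / c)`, a point `c ∈ (0, 1)` solves the saddle-point equation at
`θ > 0` iff `c < 1/2` and `g c := 1 / L c - r c = 1 / θ`. Now `g' = 1 / (c (1 - c) L²) - r`, and
`c (1 - c) L²` attains its maximum over `(0, 1/2)` exactly at `m = (1 - x*) / 2`, where
`tanh (1 / x*) = x*` gives `L m = 2 / x*` and the maximum is `1 / r_cp`. So for `r ≤ r_cp` the
function `g` is strictly increasing and takes every level at most once. For `r > r_cp` it
decreases near `m`, while `g → 0⁺` at `0` and `g → ∞` at `1/2`, and the intermediate value
theorem yields a positive level taken twice. -/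

open Real Set Filter Topology

section

variable {f f' : ℝ → ℝ}

lemma strictMonoOn_of_hasDerivAt_pos {D : Set ℝ} (hD : Convex ℝ D)
    (hf : ∀ x ∈ D, HasDerivAt f (f' x) x) (hf' : ∀ x ∈ interior D, 0 < f' x) :
    StrictMonoOn f D :=
  strictMonoOn_of_hasDerivWithinAt_pos hD (fun x hx => (hf x hx).continuousAt.continuousWithinAt)
    (fun x hx => (hf x (interior_subset hx)).hasDerivWithinAt) hf'

lemma strictAntiOn_of_hasDerivAt_neg {D : Set ℝ} (hD : Convex ℝ D)
    (hf : ∀ x ∈ D, HasDerivAt f (f' x) x) (hf' : ∀ x ∈ interior D, f' x < 0) :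
    StrictAntiOn f D :=
  strictAntiOn_of_hasDerivWithinAt_neg hD (fun x hx => (hf x hx).continuousAt.continuousWithinAt)
    (fun x hx => (hf x (interior_subset hx)).hasDerivWithinAt) hf'

lemma strictMonoOn_Ioo_of_hasDerivAt_pos_of_ne {a b m : ℝ} (hm : m ∈ Ioo a b)
    (hf : ∀ x ∈ Ioo a b, HasDerivAt f (f' x) x) (hf' : ∀ x ∈ Ioo a b, x ≠ m → 0 < f' x) :
    StrictMonoOn f (Ioo a b) := by
  rw [← Ioc_union_Ico_eq_Ioo hm.1 hm.2]
  refine StrictMonoOn.union ?_ ?_ (isGreatest_Ioc hm.1) (isLeast_Ico hm.2)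
  · refine strictMonoOn_of_hasDerivAt_pos (convex_Ioc a m)
      (fun x hx => hf x ⟨hx.1, hx.2.trans_lt hm.2⟩) fun x hx => ?_
    rw [interior_Ioc] at hx
    exact hf' x ⟨hx.1, hx.2.trans hm.2⟩ hx.2.ne
  · refine strictMonoOn_of_hasDerivAt_pos (convex_Ico m b)
      (fun x hx => hf x ⟨hm.1.trans_le hx.1, hx.2⟩) fun x hx => ?_
    rw [interior_Ico] at hx
    exact hf' x ⟨hm.1.trans hx.1, hx.2⟩ hx.1.ne'

lemma lt_of_hasDerivAt_pos_left_neg_right {a b m : ℝ} (hm : m ∈ Ioo a b)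
    (hf : ∀ x ∈ Ioo a b, HasDerivAt f (f' x) x) (hleft : ∀ x ∈ Ioo a m, 0 < f' x)
    (hright : ∀ x ∈ Ioo m b, f' x < 0) {x : ℝ} (hx : x ∈ Ioo a b) (hxm : x ≠ m) :
    f x < f m := by
  rcases hxm.lt_or_gt with hlt | hgt
  · refine strictMonoOn_of_hasDerivAt_pos (convex_Icc x m)
      (fun z hz => hf z ⟨hx.1.trans_le hz.1, hz.2.trans_lt hm.2⟩) (fun z hz => ?_)
      (left_mem_Icc.2 hlt.le) (right_mem_Icc.2 hlt.le) hlt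
    rw [interior_Icc] at hz
    exact hleft z ⟨hx.1.trans hz.1, hz.2⟩
  · refine strictAntiOn_of_hasDerivAt_neg (convex_Icc m x)
      (fun z hz => hf z ⟨hm.1.trans_le hz.1, hz.2.trans_lt hx.2⟩) (fun z hz => ?_)
      (left_mem_Icc.2 hgt.le) (right_mem_Icc.2 hgt.le) hgt
    rw [interior_Icc] at hz
    exact hright z ⟨hz.1, hz.2.trans hx.2⟩

lemma exists_pos_two_preimages {a b p q : ℝ} (hf : ContinuousOn f (Ioo a b))
    (ha : Tendsto f (𝓝[>] a) (𝓝 0)) (hb : Tendsto f (𝓝[<] b) atTop)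
    (hp : a < p) (hpq : p < q) (hq : q < b) (hfp : 0 < f p) (hfq : f q < f p) :
    ∃ v, 0 < v ∧ ∃ c₁ ∈ Ioo a b, ∃ c₂ ∈ Ioo a b, c₁ ≠ c₂ ∧ f c₁ = v ∧ f c₂ = v := by
  set v := (max (f q) 0 + f p) / 2 with hv_def
  have hv : 0 < v := by have := le_max_right (f q) 0; positivity
  have hvp : v < f p := by have := max_lt hfq hfp; linarith
  have hqv : f q < v := by have := le_max_left (f q) 0; linarith
  obtain ⟨p₀, hp₀v, hp₀⟩ :=
    ((ha.eventually (eventually_lt_nhds hv)).and (Ioo_mem_nhdsGT hp)).exists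
  obtain ⟨q₀, hq₀v, hq₀⟩ :=
    ((hb.eventually (eventually_gt_atTop v)).and (Ioo_mem_nhdsLT hq)).exists
  obtain ⟨c₁, hc₁, hc₁v⟩ := intermediate_value_Icc hp₀.2.le
    (hf.mono (Icc_subset_Ioo hp₀.1 (hpq.trans hq))) ⟨hp₀v.le, hvp.le⟩
  obtain ⟨c₂, hc₂, hc₂v⟩ := intermediate_value_Icc hq₀.1.le
    (hf.mono (Icc_subset_Ioo (hp.trans hpq) hq₀.2)) ⟨hqv.le, hq₀v.le⟩
  refine ⟨v, hv, c₁, ⟨hp₀.1.trans_le hc₁.1, hc₁.2.trans_lt (hpq.trans hq)⟩, c₂,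
    ⟨(hp.trans hpq).trans_le hc₂.1, hc₂.2.trans_lt hq₀.2⟩, ?_, hc₁v, hc₂v⟩
  exact (hc₁.2.trans_lt (hpq.trans_le hc₂.1)).ne

lemma exists_pos_two_preimages_of_not_monotoneOn {a b : ℝ} (hf : ContinuousOn f (Ioo a b))
    (ha : Tendsto f (𝓝[>] a) (𝓝[>] 0)) (hb : Tendsto f (𝓝[<] b) atTop)
    (hmono : ¬ MonotoneOn f (Ioo a b)) :
    ∃ v, 0 < v ∧ ∃ c₁ ∈ Ioo a b, ∃ c₂ ∈ Ioo a b, c₁ ≠ c₂ ∧ f c₁ = v ∧ f c₂ = v := by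
  simp only [MonotoneOn, not_forall, not_le] at hmono
  obtain ⟨p, hp, q, hq, hpq, hfq⟩ := hmono
  replace hpq : p < q := hpq.lt_of_ne (by rintro rfl; exact lt_irrefl _ hfq)
  have ha₀ := tendsto_nhds_of_tendsto_nhdsWithin ha
  rcases lt_or_ge 0 (f p) with hfp | hfp
  · exact exists_pos_two_preimages hf ha₀ hb hp.1 hpq hq.2 hfp hfq
  · obtain ⟨p₀, hp₀, hp₀'⟩ :=
      ((tendsto_nhdsWithin_iff.1 ha).2.and (Ioo_mem_nhdsGT hp.1)).exists
    exact exists_pos_two_preimages hf ha₀ hb hp₀'.1 (hp₀'.2.trans hpq) hq.2 hp₀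
      (hfq.trans_le hfp |>.trans hp₀)

end

namespace SaddlePoint

noncomputable def logOdds (c : ℝ) : ℝ := log (1 - c) - log c

noncomputable def level (r c : ℝ) : ℝ := (logOdds c)⁻¹ - r * c

noncomputable def invSlope (c : ℝ) : ℝ := c * (1 - c) * logOdds c ^ 2

variable {r c : ℝ}

lemma logOdds_inv_one_add_exp (u : ℝ) : logOdds (1 + exp u)⁻¹ = u := by
  have h : 0 < 1 + exp u := by positivity
  rw [logOdds, show 1 - (1 + exp u)⁻¹ = exp u * (1 + exp u)⁻¹ by field_simp; ring,
    log_mul (exp_pos u).ne' (inv_ne_zero h.ne'), log_exp]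
  ring

lemma inv_one_add_exp_logOdds (hc : c ∈ Ioo 0 1) : (1 + exp (logOdds c))⁻¹ = c := by
  have h1c : 0 < 1 - c := sub_pos.2 hc.2
  have hc0 : c ≠ 0 := hc.1.ne'
  rw [logOdds, exp_sub, exp_log h1c, exp_log hc.1]
  field_simp
  ring

lemma eq_inv_one_add_exp_iff (hc : c ∈ Ioo 0 1) {u : ℝ} :
    c = (1 + exp u)⁻¹ ↔ logOdds c = u :=
  ⟨fun h => h ▸ logOdds_inv_one_add_exp u, fun h => h ▸ (inv_one_add_exp_logOdds hc).symm⟩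

lemma one_sub_tanh_div_two (y : ℝ) : (1 - tanh y) / 2 = (1 + exp (2 * y))⁻¹ := by
  have h : 0 < exp y := exp_pos y
  rw [tanh_eq, exp_neg, two_mul, exp_add]
  field_simp
  ring

lemma logOdds_one_sub_tanh_div_two (y : ℝ) : logOdds ((1 - tanh y) / 2) = 2 * y := by
  rw [one_sub_tanh_div_two, logOdds_inv_one_add_exp]

lemma logOdds_pos_iff (hc : c ∈ Ioo 0 1) : 0 < logOdds c ↔ c < 1 / 2 := by
  rw [logOdds, sub_pos, log_lt_log_iff hc.1 (sub_pos.2 hc.2)]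
  constructor <;> intro h <;> linarith

lemma Ioo_zero_half_subset_Ioo_zero_one : Ioo (0 : ℝ) (1 / 2) ⊆ Ioo 0 1 :=
  Ioo_subset_Ioo_right (by norm_num)

lemma logOdds_pos (hc : c ∈ Ioo 0 (1 / 2)) : 0 < logOdds c :=
  (logOdds_pos_iff (Ioo_zero_half_subset_Ioo_zero_one hc)).2 hc.2

lemma logOdds_strictAntiOn : StrictAntiOn logOdds (Ioo 0 1) := fun x hx y hy hxy =>
  sub_lt_sub (log_lt_log (sub_pos.2 hy.2) (by linarith)) (log_lt_log hx.1 hxy)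

lemma hasDerivAt_logOdds (hc : c ∈ Ioo 0 1) : HasDerivAt logOdds (-(c * (1 - c))⁻¹) c := by
  have h1c : (1 - c) ≠ 0 := (sub_pos.2 hc.2).ne'
  have hc0 : c ≠ 0 := hc.1.ne'
  refine ((((hasDerivAt_id' c).const_sub 1).log h1c).fun_sub
    (hasDerivAt_log hc0)).congr_deriv ?_
  field_simp
  ring

lemma hasDerivAt_level (r : ℝ) (hc : c ∈ Ioo 0 (1 / 2)) :
    HasDerivAt (level r) ((invSlope c)⁻¹ - r) c := by
  refine (((hasDerivAt_logOdds (Ioo_zero_half_subset_Ioo_zero_one hc)).inv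
    (logOdds_pos hc).ne').fun_sub ((hasDerivAt_id' c).const_mul r)).congr_deriv ?_
  rw [invSlope]
  field_simp

lemma hasDerivAt_invSlope (hc : c ∈ Ioo 0 1) :
    HasDerivAt invSlope (logOdds c * ((1 - 2 * c) * logOdds c - 2)) c := by
  have h1c : (1 - c) ≠ 0 := (sub_pos.2 hc.2).ne'
  have hc0 : c ≠ 0 := hc.1.ne'
  refine (((hasDerivAt_id' c).fun_mul ((hasDerivAt_id' c).const_sub 1)).fun_mul
    ((hasDerivAt_logOdds hc).fun_pow 2)).congr_deriv ?_
  field_simp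
  ring

lemma saddle_eq_iff {θ : ℝ} (hr : 0 ≤ r) (hθ : 0 < θ) (hc : c ∈ Ioo 0 1) :
    c = (1 + exp (θ / (1 + r * θ * c)))⁻¹ ↔ c < 1 / 2 ∧ level r c = θ⁻¹ := by
  have hD : 0 < 1 + r * θ * c := by have := hc.1; positivity
  have key : (θ / (1 + r * θ * c))⁻¹ - r * c = θ⁻¹ := by field_simp; ring
  rw [eq_inv_one_add_exp_iff hc, ← logOdds_pos_iff hc, level, ← key, sub_left_inj, inv_inj]
  exact ⟨fun h => ⟨h ▸ div_pos hθ hD, h⟩, And.right⟩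

lemma continuousOn_level (r : ℝ) : ContinuousOn (level r) (Ioo 0 (1 / 2)) := fun _ hc =>
  (hasDerivAt_level r hc).continuousAt.continuousWithinAt

lemma tendsto_level_nhdsGT_zero (r : ℝ) : Tendsto (level r) (𝓝[>] 0) (𝓝[>] 0) := by
  have hlog : ContinuousAt (fun c => log (1 - c)) 0 :=
    (continuousAt_const.sub (continuousAt_id' 0)).log (by norm_num)
  have hL : Tendsto logOdds (𝓝[>] 0) atTop :=
    ((hlog.tendsto.mono_left nhdsWithin_le_nhds).add_atTop
      (tendsto_neg_atBot_atTop.comp tendsto_log_nhdsGT_zero)).congr' <| by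
        filter_upwards with c using by simp [logOdds, sub_eq_add_neg]
  have hcL : Tendsto (fun c => c * logOdds c) (𝓝[>] 0) (𝓝 0) := by
    have : ContinuousAt (fun c => c * log (1 - c) - c * log c) 0 :=
      ((continuousAt_id' 0).mul hlog).sub continuous_mul_log.continuousAt
    simpa [logOdds, mul_sub] using this.tendsto.mono_left nhdsWithin_le_nhds
  have hrc : Tendsto (fun c => r * c) (𝓝[>] 0) (𝓝 0) := by
    simpa using ((continuous_const_mul r).tendsto 0).mono_left nhdsWithin_le_nhds
  have hlevel : Tendsto (level r) (𝓝[>] 0) (𝓝 (0 - 0)) := hL.inv_tendsto_atTop.sub hrc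
  rw [sub_zero] at hlevel
  refine tendsto_nhdsWithin_iff.2 ⟨hlevel, ?_⟩
  filter_upwards [hL.eventually_gt_atTop 0,
    (hcL.const_mul r).eventually (eventually_lt_nhds (by norm_num : r * 0 < 1))] with c hL0 hrcL
  have : level r c = (1 - r * (c * logOdds c)) / logOdds c := by
    rw [level]; field_simp
  rw [mem_Ioi, this]
  exact div_pos (by linarith) hL0

lemma tendsto_level_nhdsLT_half (r : ℝ) : Tendsto (level r) (𝓝[<] (1 / 2)) atTop := by
  have hL : Tendsto logOdds (𝓝[<] (1 / 2)) (𝓝[>] 0) := by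
    refine tendsto_nhdsWithin_iff.2 ⟨?_, ?_⟩
    · have : ContinuousAt logOdds (1 / 2) :=
        ((continuousAt_const.sub continuousAt_id).log (by norm_num)).sub
          (continuousAt_id.log (by norm_num))
      have h0 : logOdds (1 / 2) = 0 := by norm_num [logOdds]
      exact h0 ▸ this.tendsto.mono_left nhdsWithin_le_nhds
    · filter_upwards [Ioo_mem_nhdsLT (by norm_num : (0 : ℝ) < 1 / 2)] with c hc
      exact logOdds_pos hc
  have hrc : Tendsto (fun c => -(r * c)) (𝓝[<] (1 / 2)) (𝓝 (-(r * (1 / 2)))) :=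
    ((continuous_const.mul continuous_id).neg.tendsto _).mono_left nhdsWithin_le_nhds
  exact (tendsto_inv_nhdsGT_zero.comp hL).atTop_add hrc

lemma invSlope_pos (hc : c ∈ Ioo 0 (1 / 2)) : 0 < invSlope c :=
  mul_pos (mul_pos hc.1 (by linarith [hc.2])) (pow_pos (logOdds_pos hc) 2)

lemma invSlope_lt_of_ne {m : ℝ} (hm : m ∈ Ioo 0 (1 / 2)) (hcrit : (1 - 2 * m) * logOdds m = 2)
    (hc : c ∈ Ioo 0 (1 / 2)) (hcm : c ≠ m) : invSlope c < invSlope m := by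
  -- the sign of `invSlope'` is that of `(1 - 2c) logOdds c - 2`, which vanishes at `m`
  have hanti : StrictAntiOn (fun c => (1 - 2 * c) * logOdds c) (Ioo 0 (1 / 2)) :=
    fun x hx y hy hxy => mul_lt_mul'' (by linarith)
      (logOdds_strictAntiOn (Ioo_zero_half_subset_Ioo_zero_one hx)
        (Ioo_zero_half_subset_Ioo_zero_one hy) hxy)
      (by linarith [hy.2]) (logOdds_pos hy).le
  refine lt_of_hasDerivAt_pos_left_neg_right hm
    (fun x hx => hasDerivAt_invSlope (Ioo_zero_half_subset_Ioo_zero_one hx))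
    (fun x hx => ?_) (fun x hx => ?_) hc hcm
  · have hx' : x ∈ Ioo 0 (1 / 2) := ⟨hx.1, hx.2.trans hm.2⟩
    exact mul_pos (logOdds_pos hx') (by linarith [hanti hx' hm hx.2])
  · have hx' : x ∈ Ioo 0 (1 / 2) := ⟨hm.1.trans hx.1, hx.2⟩
    exact mul_neg_of_pos_of_neg (logOdds_pos hx') (by linarith [hanti hm hx' hx.1])

lemma level_strictMonoOn {m : ℝ} (hm : m ∈ Ioo 0 (1 / 2)) (hr : r ≤ (invSlope m)⁻¹)
    (hmax : ∀ c ∈ Ioo 0 (1 / 2), c ≠ m → invSlope c < invSlope m) :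
    StrictMonoOn (level r) (Ioo 0 (1 / 2)) :=
  strictMonoOn_Ioo_of_hasDerivAt_pos_of_ne hm (fun _ => hasDerivAt_level r)
    fun c hc hcm => by
      have := inv_strictAnti₀ (invSlope_pos hc) (hmax c hc hcm)
      linarith

lemma not_monotoneOn_level {m : ℝ} (hm : m ∈ Ioo 0 (1 / 2)) (hr : (invSlope m)⁻¹ < r) :
    ¬ MonotoneOn (level r) (Ioo 0 (1 / 2)) := fun hmono =>
  (sub_neg.2 hr).not_ge <| (hasDerivAt_level r hm).hasDerivWithinAt.nonneg_of_monotoneOn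
    (isOpen_Ioo.preperfect m hm) hmono

end SaddlePoint

open SaddlePoint in
theorem qER_phase_transition_criterion_general (r : ℝ) (hr : 0 < r)
    (xs : ℝ) (hxs : 0 < xs) (hsol : Real.tanh (1 / xs) = xs) :
    (∃ θ : ℝ, 0 < θ ∧ ∃ c₁ c₂ : ℝ,
        c₁ ∈ Set.Ioo (0 : ℝ) 1 ∧ c₂ ∈ Set.Ioo (0 : ℝ) 1 ∧ c₁ ≠ c₂ ∧
        c₁ = (1 + Real.exp (θ / (1 + r * θ * c₁)))⁻¹ ∧
        c₂ = (1 + Real.exp (θ / (1 + r * θ * c₂)))⁻¹) ↔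
      xs ^ 2 / (1 - xs ^ 2) < r := by
  have hxs1 : xs < 1 := hsol ▸ tanh_lt_one _
  set m := (1 - xs) / 2 with hm_def
  have hm : m ∈ Ioo 0 (1 / 2) := ⟨by linarith, by linarith⟩
  have hLm : logOdds m = 2 / xs := by
    simpa only [hsol, mul_one_div] using logOdds_one_sub_tanh_div_two (1 / xs)
  have hcrit : (1 - 2 * m) * logOdds m = 2 := by rw [hLm, hm_def]; field_simp; ring
  have hrcp : (invSlope m)⁻¹ = xs ^ 2 / (1 - xs ^ 2) := by
    rw [invSlope, hLm, hm_def]; field_simp; ring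
  rw [← hrcp]
  constructor
  · rintro ⟨θ, hθ, c₁, c₂, hc₁, hc₂, hne, e₁, e₂⟩
    by_contra! hle
    rw [saddle_eq_iff hr.le hθ hc₁] at e₁
    rw [saddle_eq_iff hr.le hθ hc₂] at e₂
    exact hne <| (level_strictMonoOn hm hle fun c hc => invSlope_lt_of_ne hm hcrit hc).injOn
      ⟨hc₁.1, e₁.1⟩ ⟨hc₂.1, e₂.1⟩ (e₁.2.trans e₂.2.symm)
  · intro hlt
    obtain ⟨v, hv, c₁, hc₁, c₂, hc₂, hne, e₁, e₂⟩ := exists_pos_two_preimages_of_not_monotoneOn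
      (continuousOn_level r) (tendsto_level_nhdsGT_zero r) (tendsto_level_nhdsLT_half r)
      (not_monotoneOn_level hm hlt)
    have hθ : 0 < v⁻¹ := inv_pos.2 hv
    refine ⟨v⁻¹, hθ, c₁, c₂, Ioo_zero_half_subset_Ioo_zero_one hc₁,
      Ioo_zero_half_subset_Ioo_zero_one hc₂, hne, ?_, ?_⟩
    · rw [saddle_eq_iff hr.le hθ (Ioo_zero_half_subset_Ioo_zero_one hc₁), inv_inv]
      exact ⟨hc₁.2, e₁⟩
    · rw [saddle_eq_iff hr.le hθ (Ioo_zero_half_subset_Ioo_zero_one hc₂), inv_inv]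
      exact ⟨hc₂.2, e₂⟩

/-- Proposition 1 of the paper: for fixed `r > 0`, there exists `θ > 0` such that the
saddle-point equation `c = (1 + exp(θ/(1+rθc)))⁻¹` of the `q`-exponential Erdős–Rényi
model has at least two distinct solutions `c ∈ (0,1)` if and only if
`r > r_cp = (x*)²/(1-(x*)²)`, where `x*` is the unique positive solution of
`tanh(1/x) = x`. -/
theorem qER_phase_transition_criterion (r : ℝ) (hr : 0 < r)
    (xs : ℝ) (hxs : 0 < xs) (hsol : Real.tanh (1 / xs) = xs)
    (huniq : ∀ y : ℝ, 0 < y → Real.tanh (1 / y) = y → y = xs) :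
    (∃ θ : ℝ, 0 < θ ∧ ∃ c₁ c₂ : ℝ,
        c₁ ∈ Set.Ioo (0 : ℝ) 1 ∧ c₂ ∈ Set.Ioo (0 : ℝ) 1 ∧ c₁ ≠ c₂ ∧
        c₁ = (1 + Real.exp (θ / (1 + r * θ * c₁)))⁻¹ ∧
        c₂ = (1 + Real.exp (θ / (1 + r * θ * c₂)))⁻¹) ↔
      xs ^ 2 / (1 - xs ^ 2) < r :=
  qER_phase_transition_criterion_general r hr xs hxs hsol
end

section
/- Let x* be the unique positive solution of tanh(1/x) = x and set r_cp := (x*)²/(1−(x*)²). Then 2.276 < r_cp < 2.278 (the paper reports r_cp ≈ 2.2768). -/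
open Real Finset

private lemma tanh_formula (t : ℝ) :
    Real.tanh t = (Real.exp (2 * t) - 1) / (Real.exp (2 * t) + 1) := by
  have h1 : Real.exp t ≠ 0 := Real.exp_ne_zero t
  have h2 : 0 < Real.exp t := Real.exp_pos t
  rw [Real.tanh_eq_sinh_div_cosh, Real.sinh_eq, Real.cosh_eq, two_mul, Real.exp_add,
    Real.exp_neg]
  rw [div_eq_div_iff (by positivity) (by positivity)]
  field_simp

private lemma mono_frac {E0 E : ℝ} (h0 : 0 < E0) (h : E0 ≤ E) :
    (E0 - 1) / (E0 + 1) ≤ (E - 1) / (E + 1) := by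
  rw [div_le_div_iff₀ (by linarith) (by linarith)]
  nlinarith

private lemma mono_frac_strict {E0 E : ℝ} (h0 : 0 < E0) (h : E0 < E) :
    (E0 - 1) / (E0 + 1) < (E - 1) / (E + 1) := by
  rw [div_lt_div_iff₀ (by linarith) (by linarith)]
  nlinarith

private lemma exp_low : (22919/2081 : ℝ) < Real.exp (25000/10419) := by
  have h := Real.sum_le_exp_of_nonneg (x := 25000/10419) (by norm_num) 13
  refine lt_of_lt_of_le ?_ h
  simp only [Finset.sum_range_succ, Finset.sum_range_zero, Nat.factorial]
  norm_num

private lemma exp_high : Real.exp (1250/521) < (573/52 : ℝ) := by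
  have key : Real.exp (625/1042) ≤
      (∑ m ∈ Finset.range 8, (625/1042 : ℝ) ^ m / m.factorial) +
        (625/1042 : ℝ) ^ 8 * (8 + 1) / (Nat.factorial 8 * 8) :=
    Real.exp_bound' (by norm_num) (by norm_num) (by norm_num)
  have hS : (∑ m ∈ Finset.range 8, (625/1042 : ℝ) ^ m / m.factorial) +
        (625/1042 : ℝ) ^ 8 * (8 + 1) / (Nat.factorial 8 * 8) ≤ 1.8218 := by
    simp only [Finset.sum_range_succ, Finset.sum_range_zero, Nat.factorial]
    norm_num
  have h1 : Real.exp (625/1042) ≤ 1.8218 := key.trans hS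
  have h2 : (1250/521 : ℝ) = 4 * (625/1042) := by norm_num
  have h3 : Real.exp (1250/521) = Real.exp (625/1042) ^ 4 := by
    rw [h2, ← Real.exp_nat_mul]; norm_num
  have hpos : 0 ≤ Real.exp (625/1042) := (Real.exp_pos _).le
  calc Real.exp (1250/521) = Real.exp (625/1042) ^ 4 := h3
    _ ≤ (1.8218 : ℝ) ^ 4 := by gcongr
    _ < 573/52 := by norm_num

/-- Numerical bounds on the critical value: if `x*` is the unique positive solution of
`tanh(1/x) = x` and `r_cp = (x*)²/(1-(x*)²)`, then `2.276 < r_cp < 2.278`. -/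
theorem qER_critical_r_bounds (xs : ℝ) (hxs : 0 < xs)
    (hsol : Real.tanh (1 / xs) = xs)
    (huniq : ∀ y : ℝ, 0 < y → Real.tanh (1 / y) = y → y = xs) :
    2.276 < xs ^ 2 / (1 - xs ^ 2) ∧ xs ^ 2 / (1 - xs ^ 2) < 2.278 := by
  have hxs1 : xs < 1 := by
    rw [← hsol, tanh_formula]
    have hE := Real.exp_pos (2 * (1 / xs))
    rw [div_lt_one (by linarith)]; linarith
  have ha : (10419/12500 : ℝ) < xs := by
    by_contra h
    push_neg at h
    have hinv : (12500/10419 : ℝ) ≤ 1 / xs := by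
      rw [div_le_div_iff₀ (by norm_num) hxs]; nlinarith
    have hE : (22919/2081 : ℝ) < Real.exp (2 * (1/xs)) := by
      calc (22919/2081 : ℝ) < Real.exp (25000/10419) := exp_low
        _ ≤ Real.exp (2 * (1/xs)) := Real.exp_le_exp.2 (by linarith)
    have hlt := mono_frac_strict (by norm_num : (0:ℝ) < 22919/2081) hE
    rw [← tanh_formula, hsol] at hlt
    have heq : ((22919:ℝ)/2081 - 1) / (22919/2081 + 1) = 10419/12500 := by norm_num
    rw [heq] at hlt
    linarith
  have hb : xs < (521/625 : ℝ) := by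
    by_contra h
    push_neg at h
    have hinv : 1 / xs ≤ (625/521 : ℝ) := by
      rw [div_le_div_iff₀ hxs (by norm_num)]; nlinarith
    have hE : Real.exp (2 * (1/xs)) ≤ Real.exp (1250/521) :=
      Real.exp_le_exp.2 (by linarith)
    have hmono := mono_frac (by positivity : (0:ℝ) < Real.exp (2 * (1/xs))) hE
    rw [← tanh_formula, hsol] at hmono
    have : xs < (521/625 : ℝ) := by
      calc xs ≤ (Real.exp (1250/521) - 1) / (Real.exp (1250/521) + 1) := hmono
        _ < ((573:ℝ)/52 - 1) / (573/52 + 1) :=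
            mono_frac_strict (Real.exp_pos _) exp_high
        _ ≤ 521/625 := by norm_num
    linarith
  constructor
  · rw [lt_div_iff₀ (by nlinarith)]
    nlinarith
  · rw [div_lt_iff₀ (by nlinarith)]
    nlinarith
end

section
/- (Proposition 2.) Fix r > 0 and θ > 0. There exists c ∈ (0,1) satisfying (1/θ + rc)² = r c (1−c) — equivalently, a point where the second derivative in c of φ_r(c,θ) = H_b(c) − (1/r) ln(1+rθc), namely −1/(c(1−c)) + r/(1/θ+rc)², vanishes — if and only if θ ≥ 2 + 2√((r+1)/r). In particular, the smallest such θ is θ_cp(r) = 2 + √(4(r+1)/r). -/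
/-! Clearing the denominator `t²` turns the inflection equation `(1/t + r c)² = r c (1 - c)`
into the quadratic `r(r+1)t² c² + r t (2 - t) c + 1 = 0`, with discriminant
`r t² (r (t-2)² - 4(r+1))`. As the leading and constant coefficients are positive, a positive root
forces a negative linear coefficient (`t > 2`) and a nonnegative discriminant; conversely, under
these two conditions the smaller root is positive and lies below the vertex
`(t-2)/(2(r+1)t) < 1`. Together the two conditions say `t ≥ 2 + 2√((r+1)/r)`. -/

open Set

section Quadratic

variable {K : Type*} [Field K] [LinearOrder K] [IsStrictOrderedRing K] {a b c x : K}

theorem linear_coeff_neg_of_quadratic_eq_zero (ha : 0 ≤ a) (hc : 0 < c) (hx : 0 < x)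
    (h : a * (x * x) + b * x + c = 0) : b < 0 := by
  have hbx : b * x < 0 := by nlinarith [mul_nonneg ha (mul_self_nonneg x)]
  exact neg_of_mul_neg_left hbx hx.le

theorem discrim_nonneg_of_quadratic_eq_zero (h : a * (x * x) + b * x + c = 0) :
    0 ≤ discrim a b c :=
  discrim_eq_sq_of_quadratic_eq_zero h ▸ sq_nonneg _

end Quadratic

theorem exists_quadratic_eq_zero_mem_Ioc {a b c : ℝ} (ha : 0 < a) (hc : 0 < c) (hb : b < 0)
    (hd : 0 ≤ discrim a b c) : ∃ x ∈ Ioc 0 (-b / (2 * a)), a * (x * x) + b * x + c = 0 := by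
  set s := √(discrim a b c)
  have hs : discrim a b c = s * s := (Real.mul_self_sqrt hd).symm
  have hs_lt : s < -b := by
    rw [Real.sqrt_lt' (by linarith), discrim]
    nlinarith [mul_pos ha hc]
  refine ⟨(-b - s) / (2 * a), ⟨div_pos (by linarith) (by positivity), ?_⟩, ?_⟩
  · gcongr
    linarith [Real.sqrt_nonneg (discrim a b c)]
  · exact (quadratic_eq_zero_iff ha.ne' hs _).mpr (Or.inr rfl)

theorem neg_one_div_add_div_sq_eq_zero_iff {p y r : ℝ} (hp : p ≠ 0) (hy : y ≠ 0) :
    -(1 / p) + r / y ^ 2 = 0 ↔ y ^ 2 = r * p := by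
  rw [neg_add_eq_zero, div_eq_div_iff hp (pow_ne_zero 2 hy), one_mul]

theorem two_add_two_sqrt_eq (r : ℝ) : 2 + 2 * √((r + 1) / r) = 2 + √(4 * (r + 1) / r) := by
  rw [mul_div_assoc, Real.sqrt_mul zero_le_four, show (4 : ℝ) = 2 ^ 2 by norm_num,
    Real.sqrt_sq zero_le_two]

theorem two_add_two_sqrt_le_iff {r t : ℝ} (hr : 0 < r) :
    2 + 2 * √((r + 1) / r) ≤ t ↔ 2 < t ∧ 4 * (r + 1) ≤ r * (t - 2) ^ 2 := by
  rw [two_add_two_sqrt_eq, ← le_sub_iff_add_le', Real.sqrt_le_iff, div_le_iff₀' hr]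
  constructor
  · rintro ⟨ht, hsq⟩
    refine ⟨lt_of_le_of_ne (by linarith) fun h ↦ ?_, hsq⟩
    subst h
    nlinarith
  · rintro ⟨ht, hsq⟩
    exact ⟨by linarith, hsq⟩

section Inflection

variable {r t c : ℝ}

theorem inflection_eq_iff_quadratic (ht : t ≠ 0) :
    (1 / t + r * c) ^ 2 = r * c * (1 - c) ↔
      r * (r + 1) * t ^ 2 * (c * c) + r * t * (2 - t) * c + 1 = 0 := by
  have hdiff : (1 / t + r * c) ^ 2 - r * c * (1 - c) =
      (r * (r + 1) * t ^ 2 * (c * c) + r * t * (2 - t) * c + 1) / t ^ 2 := by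
    field_simp
    ring
  rw [← sub_eq_zero, hdiff, div_eq_zero_iff, or_iff_left (pow_ne_zero 2 ht)]

theorem discrim_inflection_quadratic :
    discrim (r * (r + 1) * t ^ 2) (r * t * (2 - t)) 1 =
      r * t ^ 2 * (r * (t - 2) ^ 2 - 4 * (r + 1)) := by
  rw [discrim]
  ring

theorem exists_inflection_iff (hr : 0 < r) (ht : 0 < t) :
    (∃ c ∈ Ioo (0 : ℝ) 1, (1 / t + r * c) ^ 2 = r * c * (1 - c)) ↔
      2 + 2 * √((r + 1) / r) ≤ t := by
  have hrt : 0 < r * t ^ 2 := by positivity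
  have hd : 0 ≤ discrim (r * (r + 1) * t ^ 2) (r * t * (2 - t)) 1 ↔
      4 * (r + 1) ≤ r * (t - 2) ^ 2 := by
    rw [discrim_inflection_quadratic, mul_nonneg_iff_of_pos_left hrt, sub_nonneg]
  have hb : r * t * (2 - t) < 0 ↔ 2 < t := by
    rw [← neg_pos, ← mul_neg, neg_sub, mul_pos_iff_of_pos_left (mul_pos hr ht), sub_pos]
  simp only [inflection_eq_iff_quadratic ht.ne']
  rw [two_add_two_sqrt_le_iff hr, ← hd, ← hb]
  constructor
  · rintro ⟨c, ⟨hc, -⟩, hroot⟩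
    exact ⟨linear_coeff_neg_of_quadratic_eq_zero (by positivity) one_pos hc hroot,
      discrim_nonneg_of_quadratic_eq_zero hroot⟩
  · rintro ⟨hneg, hdisc⟩
    obtain ⟨c, ⟨hc, hc_vertex⟩, hroot⟩ :=
      exists_quadratic_eq_zero_mem_Ioc (by positivity) one_pos hneg hdisc
    refine ⟨c, ⟨hc, hc_vertex.trans_lt ?_⟩, hroot⟩
    rw [div_lt_one (by positivity)]
    nlinarith [mul_pos hr ht]

end Inflection

/-- Proposition 2 of the paper: for fixed `r > 0` and `θ > 0`, there exists
`c ∈ (0,1)` satisfying `(1/θ + rc)² = rc(1-c)` — equivalently, a point where the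
second derivative in `c` of `φ_r(c,θ)`, namely `-1/(c(1-c)) + r/(1/θ+rc)²`,
vanishes — if and only if `θ ≥ 2 + 2√((r+1)/r)`. In particular, the smallest such
`θ` is `θ_cp(r) = 2 + √(4(r+1)/r)`. -/
theorem qER_critical_point (r θ : ℝ) (hr : 0 < r) (hθ : 0 < θ) :
    ((∃ c ∈ Set.Ioo (0 : ℝ) 1, (1 / θ + r * c) ^ 2 = r * c * (1 - c)) ↔
      2 + 2 * Real.sqrt ((r + 1) / r) ≤ θ) ∧
    ((∃ c ∈ Set.Ioo (0 : ℝ) 1,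
        -(1 / (c * (1 - c))) + r / (1 / θ + r * c) ^ 2 = 0) ↔
      2 + 2 * Real.sqrt ((r + 1) / r) ≤ θ) ∧
    IsLeast {t : ℝ | 0 < t ∧
        ∃ c ∈ Set.Ioo (0 : ℝ) 1, (1 / t + r * c) ^ 2 = r * c * (1 - c)}
      (2 + Real.sqrt (4 * (r + 1) / r)) := by
  have hsecond : ∀ c ∈ Ioo (0 : ℝ) 1, -(1 / (c * (1 - c))) + r / (1 / θ + r * c) ^ 2 = 0 ↔
      (1 / θ + r * c) ^ 2 = r * c * (1 - c) := fun c ⟨hc0, hc1⟩ ↦ by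
    rw [neg_one_div_add_div_sq_eq_zero_iff (by nlinarith) (by positivity), mul_assoc]
  refine ⟨exists_inflection_iff hr hθ, ?_, ?_, ?_⟩
  · rw [← exists_inflection_iff hr hθ]
    exact exists_congr fun c ↦ and_congr_right (hsecond c)
  · have hpos : 0 < 2 + √(4 * (r + 1) / r) := by positivity
    exact ⟨hpos, (exists_inflection_iff hr hpos).mpr (two_add_two_sqrt_eq r).le⟩
  · rintro t ⟨ht, hc⟩
    exact (two_add_two_sqrt_eq r).symm.le.trans ((exists_inflection_iff hr ht).mp hc)
end
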